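/- (Termination Theorem) In any execution of Algorithm 1 in the stated model, every message that is toco-broadcast by some process is eventually toco-delivered by every process in the system. -/

import Mathlib

/-!
Operational model of Algorithm 1 (the `G`-fisheye (SC,CC)-broadcast algorithm).

`n` sequential asynchronous processes `p_0, …, p_{n-1}` (type `Fin n`) exchange
application messages of type `M` through reliable FIFO channels (one queue per
ordered pair of processes).  A proximity graph is a `SimpleGraph (Fin n)`.
-/

namespace Fisheye

/-- A tuple `⟨m, s_caus, s_tot, sender⟩`, as carried by `TOCOBC` protocol
messages and as stored in the `pending` sets of Algorithm 1. -/
structure Tuple (n : ℕ) (M : Type) where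
  msg : M
  scaus : Fin n → ℕ
  stot : ℕ
  sender : Fin n

/-- Protocol messages of Algorithm 1. -/
inductive PMsg (n : ℕ) (M : Type) where
  | tocobc (tp : Tuple n M)
  | catchup (d : ℕ) (sender : Fin n)

/-- Local state of a process: the vector clock `causal_i[1..n]`, the vector of
logical clock values `total_i[1..n]`, and the set `pending_i`. -/
structure ProcState (n : ℕ) (M : Type) where
  causal : Fin n → ℕ
  total : Fin n → ℕ
  pending : Set (Tuple n M)

/-- Global configuration: local states plus channel contents.
`chan j i` is the FIFO queue of protocol messages in transit from `p_j`
to `p_i` (head = oldest message). -/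
structure Config (n : ℕ) (M : Type) where
  proc : Fin n → ProcState n M
  chan : Fin n → Fin n → List (PMsg n M)

/-- Initially all clocks are `0`, all pending sets and channels are empty. -/
def initConfig (n : ℕ) (M : Type) : Config n M where
  proc := fun _ => { causal := fun _ => 0, total := fun _ => 0, pending := ∅ }
  chan := fun _ _ => []

/-- Lexicographic strict order on timestamps `⟨s_tot, sender⟩`. -/
def tsLt {n : ℕ} (x y : ℕ × Fin n) : Prop :=
  x.1 < y.1 ∨ (x.1 = y.1 ∧ x.2 < y.2)

/-- Lexicographic (reflexive) order on timestamps. -/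
def tsLe {n : ℕ} (x y : ℕ × Fin n) : Prop := tsLt x y ∨ x = y

/-- The set `C` at process `p_i`: pending tuples whose causal timestamp is
pointwise `≤ causal_i[·]`. -/
def inC {n : ℕ} {M : Type} (c : Config n M) (i : Fin n) (tp : Tuple n M) : Prop :=
  tp ∈ (c.proc i).pending ∧ ∀ k, tp.scaus k ≤ (c.proc i).causal k

/-- The set `T1` at `p_i`: tuples of `C` whose sender `p_j` satisfies
`⟨total_i[k], k⟩ > ⟨s_tot, j⟩` for every neighbor `p_k` of `p_j` in `G`. -/
def inT1 {n : ℕ} {M : Type} (G : SimpleGraph (Fin n)) (c : Config n M) (i : Fin n)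
    (tp : Tuple n M) : Prop :=
  inC c i tp ∧ ∀ k, G.Adj tp.sender k → tsLt (tp.stot, tp.sender) ((c.proc i).total k, k)

/-- The set `T2` at `p_i`: tuples of `T1` such that every pending tuple whose
sender is a neighbor of `p_j` has a (lexicographically) larger timestamp. -/
def inT2 {n : ℕ} {M : Type} (G : SimpleGraph (Fin n)) (c : Config n M) (i : Fin n)
    (tp : Tuple n M) : Prop :=
  inT1 G c i tp ∧ ∀ tp' ∈ (c.proc i).pending, G.Adj tp.sender tp'.sender →
    tsLt (tp.stot, tp.sender) (tp'.stot, tp'.sender)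

/-- Transition labels: `p_i` toco-broadcasts `m`; `p_i` receives the head
`TOCOBC` (resp. `CATCH_UP`) message of the channel from `p_j`; `p_i`
toco-delivers the message of the pending tuple `tp`. -/
inductive Label (n : ℕ) (M : Type) where
  | broadcast (i : Fin n) (m : M)
  | recvToco (i j : Fin n)
  | recvCatchup (i j : Fin n)
  | deliver (i : Fin n) (tp : Tuple n M)

/-- The transition relation of Algorithm 1. -/
inductive Step {n : ℕ} {M : Type} (G : SimpleGraph (Fin n)) :
    Config n M → Label n M → Config n M → Prop
  /-- `TOCO_broadcast(m)` at `p_i`: increment `total_i[i]`, send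
  `TOCOBC(m, ⟨causal_i[·], total_i[i], i⟩)` to every other process, add it to
  `pending_i`, and increment `causal_i[i]`. -/
  | broadcast (c : Config n M) (i : Fin n) (m : M) :
      Step G c (.broadcast i m)
        { proc := Function.update c.proc i
            { causal := Function.update (c.proc i).causal i ((c.proc i).causal i + 1)
              total := Function.update (c.proc i).total i ((c.proc i).total i + 1)
              pending := insert ⟨m, (c.proc i).causal, (c.proc i).total i + 1, i⟩
                           (c.proc i).pending }
          chan := fun a b =>
            if a = i ∧ b ≠ i then
              c.chan a b ++ [PMsg.tocobc ⟨m, (c.proc i).causal, (c.proc i).total i + 1, i⟩]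
            else c.chan a b }
  /-- Reception by `p_i` of the head `TOCOBC(m, ⟨s_caus, s_tot, sender⟩)` of the
  channel from `p_j`: add the tuple to `pending_i`, set `total_i[sender] := s_tot`,
  and if `total_i[i] ≤ s_tot`, set `total_i[i] := s_tot + 1` and send
  `CATCH_UP(total_i[i], i)` to every other process. -/
  | recvToco (c : Config n M) (i j : Fin n) (tp : Tuple n M) (rest : List (PMsg n M))
      (hhead : c.chan j i = PMsg.tocobc tp :: rest) :
      Step G c (.recvToco i j)
        { proc := Function.update c.proc i
            { causal := (c.proc i).causal
              total :=
                if (c.proc i).total i ≤ tp.stot then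
                  Function.update (Function.update (c.proc i).total tp.sender tp.stot) i
                    (tp.stot + 1)
                else Function.update (c.proc i).total tp.sender tp.stot
              pending := insert tp (c.proc i).pending }
          chan := fun a b =>
            if a = j ∧ b = i then rest
            else if (c.proc i).total i ≤ tp.stot ∧ a = i ∧ b ≠ i then
              c.chan a b ++ [PMsg.catchup (tp.stot + 1) i]
            else c.chan a b }
  /-- Reception by `p_i` of the head `CATCH_UP(d, s)` of the channel from `p_j`:
  set `total_i[s] := d`. -/
  | recvCatchup (c : Config n M) (i j : Fin n) (d : ℕ) (s : Fin n) (rest : List (PMsg n M))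
      (hhead : c.chan j i = PMsg.catchup d s :: rest) :
      Step G c (.recvCatchup i j)
        { proc := Function.update c.proc i
            { causal := (c.proc i).causal
              total := Function.update (c.proc i).total s d
              pending := (c.proc i).pending }
          chan := fun a b => if a = j ∧ b = i then rest else c.chan a b }
  /-- The background task at `p_i`: toco-deliver the message of a tuple of `T2`
  with lexicographically minimal timestamp `⟨s_tot, sender⟩`, remove it from
  `pending_i`, and (if its sender is not `p_i`) increment `causal_i[sender]`. -/
  | deliver (c : Config n M) (i : Fin n) (tp : Tuple n M)
      (hT2 : inT2 G c i tp)
      (hmin : ∀ tp', inT2 G c i tp' → tsLe (tp.stot, tp.sender) (tp'.stot, tp'.sender)) :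
      Step G c (.deliver i tp)
        { proc := Function.update c.proc i
            { causal :=
                if tp.sender = i then (c.proc i).causal
                else Function.update (c.proc i).causal tp.sender
                       ((c.proc i).causal tp.sender + 1)
              total := (c.proc i).total
              pending := (c.proc i).pending \ {tp} }
          chan := c.chan }

/-- Either a stuttering step (no transition) or a step of Algorithm 1. -/
def OptStep {n : ℕ} {M : Type} (G : SimpleGraph (Fin n)) (c : Config n M) :
    Option (Label n M) → Config n M → Prop
  | none, c' => c' = c
  | some l, c' => Step G c l c'

/-- An execution of Algorithm 1: an infinite sequence of configurations starting
in the initial configuration, each obtained from the previous one by (at most)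
one transition.  Toco-broadcast (application) messages are assumed unique: no
message is toco-broadcast twice. -/
structure Execution (n : ℕ) (M : Type) (G : SimpleGraph (Fin n)) where
  cfg : ℕ → Config n M
  lbl : ℕ → Option (Label n M)
  init : cfg 0 = initConfig n M
  steps : ∀ t, OptStep G (cfg t) (lbl t) (cfg (t + 1))
  uniqueBcast : ∀ (m : M) (i i' : Fin n) (t t' : ℕ),
    lbl t = some (.broadcast i m) → lbl t' = some (.broadcast i' m) → t = t'

/-- `p_i` toco-broadcasts `m` at time `t`. -/
def Execution.broadcastsAt {n : ℕ} {M : Type} {G : SimpleGraph (Fin n)}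
    (e : Execution n M G) (i : Fin n) (m : M) (t : ℕ) : Prop :=
  e.lbl t = some (.broadcast i m)

/-- `p_i` toco-delivers `m` at time `t`. -/
def Execution.deliversAt {n : ℕ} {M : Type} {G : SimpleGraph (Fin n)}
    (e : Execution n M G) (i : Fin n) (m : M) (t : ℕ) : Prop :=
  ∃ tp : Tuple n M, tp.msg = m ∧ e.lbl t = some (.deliver i tp)

/-- The message causal order `⇝_M` of the execution: generated by (i) `m1`
toco-broadcast before `m2` by the same process, (ii) `m1` toco-delivered by a
process before that process toco-broadcasts `m2`, and transitivity. -/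
inductive Execution.MsgCausal {n : ℕ} {M : Type} {G : SimpleGraph (Fin n)}
    (e : Execution n M G) : M → M → Prop
  | sameProc {i : Fin n} {m1 m2 : M} {t1 t2 : ℕ} :
      t1 < t2 → e.broadcastsAt i m1 t1 → e.broadcastsAt i m2 t2 → e.MsgCausal m1 m2
  | delivered {i : Fin n} {m1 m2 : M} {t1 t2 : ℕ} :
      t1 < t2 → e.deliversAt i m1 t1 → e.broadcastsAt i m2 t2 → e.MsgCausal m1 m2
  | trans {m1 m2 m3 : M} : e.MsgCausal m1 m2 → e.MsgCausal m2 m3 → e.MsgCausal m1 m3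

/-- The delivery condition of the background task of `p_i` is enabled. -/
def Deliverable {n : ℕ} {M : Type} (G : SimpleGraph (Fin n)) (e : Execution n M G)
    (i : Fin n) (t : ℕ) : Prop :=
  ∃ tp : Tuple n M, inT2 G (e.cfg t) i tp

/-- Fairness assumptions of the model: channels are reliable (a protocol message
in transit is eventually received) and the background task of each process is
eventually executed whenever it stays enabled. -/
structure Fair {n : ℕ} {M : Type} {G : SimpleGraph (Fin n)} (e : Execution n M G) : Prop where
  recvFair : ∀ t (i j : Fin n), (e.cfg t).chan j i ≠ [] →
    ∃ t', t ≤ t' ∧ (e.lbl t' = some (.recvToco i j) ∨ e.lbl t' = some (.recvCatchup i j))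
  deliverFair : ∀ t (i : Fin n), (∀ t', t ≤ t' → Deliverable G e i t') →
    ∃ t', t ≤ t' ∧ ∃ tp : Tuple n M, e.lbl t' = some (.deliver i tp)

end Fisheye


/-!
Induction on the timestamp `⟨s_tot, sender⟩` of the broadcast tuple `tp`, ordered
lexicographically: assume every tuple with a smaller timestamp is delivered everywhere. At any
process `p_j`, eventually and from then on
* `tp` is pending: the FIFO channels are fair, and `tp` leaves `pending_j` only when delivered;
* `causal_j ≥ tp.scaus`: `causal_j[k]` counts the tuples from `p_k` broadcast or delivered by
  `p_j`, and every tuple counted in `tp.scaus` has a smaller `s_tot`;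
* `total_j[k] > tp.stot` for every neighbour `p_k` of the sender: `p_k` raises its clock above
  `tp.stot` on receiving `tp`, and its clock values reach `p_j` in increasing order;
* no tuple with a smaller timestamp is pending: timestamps identify tuples, only finitely many
  are smaller, and each of them is delivered once and never re-enters `pending_j`.
So `tp` stays in `T2` with the minimal timestamp, and fairness of the background task delivers it.
-/

namespace Fisheye
variable {n : ℕ} {M : Type} {G : SimpleGraph (Fin n)}

@[simp]
def PMsg.clock : PMsg n M → ℕ
  | .tocobc tp => tp.stot
  | .catchup d _ => d

@[simp]
def PMsg.sender : PMsg n M → Fin n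
  | .tocobc tp => tp.sender
  | .catchup _ s => s

def Config.broadcastTuple (c : Config n M) (i : Fin n) (m : M) : Tuple n M :=
  ⟨m, (c.proc i).causal, (c.proc i).total i + 1, i⟩

/-- The successive values `p_i` will hold for `total_i[j]`: the current one, then those in
transit from `p_j`. -/
def Config.view (c : Config n M) (j i : Fin n) : List ℕ :=
  (c.proc i).total j :: (c.chan j i).map PMsg.clock

structure Config.Inv (c : Config n M) : Prop where
  chan_self : ∀ i, c.chan i i = []
  sender_eq : ∀ j i p, p ∈ c.chan j i → p.sender = j
  view_chain : ∀ j i, i ≠ j → (c.view j i).IsChain (· < ·)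
  view_getLast : ∀ j i, i ≠ j →
    (c.view j i).getLast (List.cons_ne_nil _ _) = (c.proc j).total j
  stot_le_total_sender : ∀ i, ∀ tp ∈ (c.proc i).pending,
    tp.stot ≤ (c.proc i).total tp.sender
  stot_le_total_self : ∀ i, ∀ tp ∈ (c.proc i).pending, tp.stot ≤ (c.proc i).total i

def Tuple.ts (tp : Tuple n M) : Lex (ℕ × Fin n) := toLex (tp.stot, tp.sender)

theorem tsLt_iff_toLex_lt {x y : ℕ × Fin n} : tsLt x y ↔ toLex x < toLex y :=
  Prod.Lex.toLex_lt_toLex.symm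

theorem tsLe_iff_toLex_le {x y : ℕ × Fin n} : tsLe x y ↔ toLex x ≤ toLex y := by
  rw [tsLe, tsLt_iff_toLex_lt, le_iff_lt_or_eq, toLex_inj]

theorem Tuple.ts_lt_of_stot_lt {tp tp' : Tuple n M} (h : tp.stot < tp'.stot) : tp.ts < tp'.ts :=
  Prod.Lex.toLex_lt_toLex.2 (.inl h)

section Step

variable {c c' : Config n M} {l : Label n M}

theorem Config.Inv.of_chan_eq_cons (hc : c.Inv) {j i : Fin n} {p : PMsg n M}
    {rest : List (PMsg n M)} (h : c.chan j i = p :: rest) :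
    p.sender = j ∧ j ≠ i ∧ (c.proc i).total j < p.clock := by
  have hji : j ≠ i := by rintro rfl; simp [hc.chan_self] at h
  have := hc.view_chain j i hji.symm
  simp only [Config.view, h, List.map_cons, List.isChain_cons_cons] at this
  exact ⟨hc.sender_eq j i p (by simp [h]), hji, this.1⟩

theorem mem_chan_of_step (h : Step G c l c') {j i : Fin n} {p : PMsg n M}
    (hp : p ∈ c'.chan j i) :
    p ∈ c.chan j i ∨ j ≠ i ∧ ((∃ m, l = .broadcast j m ∧ p = .tocobc (c.broadcastTuple j m)) ∨
      ∃ d, p = .catchup d j) := by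
  cases h with
  | broadcast i0 m =>
    simp only at hp
    split_ifs at hp with hc
    · obtain ⟨rfl, hi⟩ := hc
      simp only [List.mem_append, List.mem_singleton] at hp
      rcases hp with hp | rfl
      · exact .inl hp
      · exact .inr ⟨hi.symm, .inl ⟨m, rfl, rfl⟩⟩
    · exact .inl hp
  | recvToco i0 j0 tp rest hhead =>
    simp only at hp
    split_ifs at hp with hc hc'
    · obtain ⟨rfl, rfl⟩ := hc; simp [hhead, hp]
    · obtain ⟨-, rfl, hi⟩ := hc'
      simp only [List.mem_append, List.mem_singleton] at hp
      rcases hp with hp | rfl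
      · exact .inl hp
      · exact .inr ⟨hi.symm, .inr ⟨_, rfl⟩⟩
    · exact .inl hp
  | recvCatchup i0 j0 d s rest hhead =>
    simp only at hp
    split_ifs at hp with hc
    · obtain ⟨rfl, rfl⟩ := hc; simp [hhead, hp]
    · exact .inl hp
  | deliver => exact .inl hp

theorem total_le_total_of_step (hc : c.Inv) (h : Step G c l c') (i k : Fin n) :
    (c.proc i).total k ≤ (c'.proc i).total k := by
  cases h with
  | broadcast i0 m =>
    rcases eq_or_ne i i0 with rfl | hi
    · rcases eq_or_ne k i with rfl | hk <;> simp [*]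
    · simp [hi]
  | recvToco i0 j tp rest hhead =>
    obtain ⟨hs, -, hlt⟩ := hc.of_chan_eq_cons hhead
    simp only [PMsg.sender, PMsg.clock] at hs hlt
    subst hs
    rcases eq_or_ne i i0 with rfl | hi
    · simp only [Function.update_self]
      split_ifs <;> simp only [Function.update_apply] <;> split_ifs <;> subst_vars <;> omega
    · simp [hi]
  | recvCatchup i0 j d s rest hhead =>
    obtain ⟨hs, -, hlt⟩ := hc.of_chan_eq_cons hhead
    simp only [PMsg.sender, PMsg.clock] at hs hlt
    subst hs
    rcases eq_or_ne i i0 with rfl | hi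
    · simp only [Function.update_self, Function.update_apply]
      split_ifs <;> subst_vars <;> omega
    · simp [hi]
  | deliver i0 tp => rcases eq_or_ne i i0 with rfl | hi <;> simp [*]

/-- A step leaves `p_i`'s view of `p_j` unchanged, appends the new clock value sent by `p_j`, or
consumes the oldest value in transit. -/
def Config.ViewStep (c c' : Config n M) (j i : Fin n) : Prop :=
  (c'.view j i = c.view j i ∧ (c'.proc j).total j = (c.proc j).total j) ∨
  (c'.view j i = c.view j i ++ [(c'.proc j).total j] ∧
    (c.proc j).total j < (c'.proc j).total j) ∨
  (c'.view j i = (c.view j i).tail ∧ (c'.proc j).total j = (c.proc j).total j)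

theorem viewStep_of_recvToco (hc : c.Inv) {i0 j0 : Fin n} (h : Step G c (.recvToco i0 j0) c')
    {j i : Fin n} (hij : i ≠ j) : c.ViewStep c' j i := by
  cases h with
  | recvToco _ _ tp rest hhead =>
  obtain ⟨hs, hji, -⟩ := hc.of_chan_eq_cons hhead
  simp only [PMsg.sender] at hs
  subst hs
  by_cases hp : j = tp.sender ∧ i = i0
  · obtain ⟨rfl, rfl⟩ := hp
    exact .inr (.inr ⟨by simp [Config.view, hhead, ite_apply, hji], by simp [hji]⟩)
  by_cases hb : (c.proc i0).total i0 ≤ tp.stot ∧ j = i0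
  · obtain ⟨hle, rfl⟩ := hb
    exact .inr (.inl ⟨by simp [Config.view, hij, hle, hji.symm], by simp [hle]⟩)
  refine .inl ⟨?_, ?_⟩
  · rcases eq_or_ne i i0 with rfl | hi
    · have hj : j ≠ tp.sender := fun h => hp ⟨h, rfl⟩
      simp [Config.view, hij.symm, hj, ite_apply]
    · rcases eq_or_ne j i0 with rfl | hj
      · have hgt : ¬(c.proc j).total j ≤ tp.stot := fun hle => hb ⟨hle, rfl⟩
        simp [Config.view, hi, hgt]
      · simp [Config.view, hi, hj]
  · rcases eq_or_ne j i0 with rfl | hj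
    · simp_all [ite_apply, hji.symm]
    · simp [hj]

theorem viewStep_of_step (hc : c.Inv) (h : Step G c l c') {j i : Fin n} (hij : i ≠ j) :
    c.ViewStep c' j i := by
  cases h with
  | broadcast i0 m =>
    rcases eq_or_ne j i0 with rfl | hj
    · exact .inr (.inl ⟨by simp [Config.view, hij], by simp⟩)
    · refine .inl ⟨?_, by simp [hj]⟩
      rcases eq_or_ne i i0 with rfl | hi <;> simp [Config.view, *]
  | recvToco i0 j0 tp rest hhead =>
    exact viewStep_of_recvToco (G := G) hc (.recvToco _ _ _ _ _ hhead) hij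
  | recvCatchup i0 j0 d s rest hhead =>
    obtain ⟨hs, hji, -⟩ := hc.of_chan_eq_cons hhead
    simp only [PMsg.sender] at hs
    subst hs
    by_cases hp : j = s ∧ i = i0
    · obtain ⟨rfl, rfl⟩ := hp
      exact .inr (.inr ⟨by simp [Config.view, hhead], by simp [hji]⟩)
    refine .inl ⟨?_, ?_⟩
    · rcases eq_or_ne i i0 with rfl | hi
      · have hj : j ≠ s := fun h => hp ⟨h, rfl⟩
        simp [Config.view, hj]
      · simp [Config.view, hi]
    · rcases eq_or_ne j i0 with rfl | hj <;> simp [*, hji.symm]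
  | deliver i0 tp =>
    refine .inl ⟨?_, ?_⟩
    · rcases eq_or_ne i i0 with rfl | hi <;> simp [Config.view, *]
    · rcases eq_or_ne j i0 with rfl | hj <;> simp [*]

theorem mem_pending_of_step (h : Step G c l c') {i : Fin n} {tp : Tuple n M}
    (htp : tp ∈ (c'.proc i).pending) :
    tp ∈ (c.proc i).pending ∨ (∃ m, l = .broadcast i m ∧ tp = c.broadcastTuple i m) ∨
      ∃ j rest, l = .recvToco i j ∧ c.chan j i = .tocobc tp :: rest := by
  cases h with
  | broadcast i0 m =>
    rcases eq_or_ne i i0 with rfl | hi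
    · simp only [Function.update_self, Set.mem_insert_iff] at htp
      rcases htp with rfl | htp
      · exact .inr (.inl ⟨m, rfl, rfl⟩)
      · exact .inl htp
    · simp_all
  | recvToco i0 j0 tp0 rest hhead =>
    rcases eq_or_ne i i0 with rfl | hi
    · simp only [Function.update_self, Set.mem_insert_iff] at htp
      rcases htp with rfl | htp
      · exact .inr (.inr ⟨j0, rest, rfl, hhead⟩)
      · exact .inl htp
    · simp_all
  | recvCatchup i0 => rcases eq_or_ne i i0 with rfl | hi <;> simp_all
  | deliver i0 => rcases eq_or_ne i i0 with rfl | hi <;> simp_all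

theorem Step.mem_pending_of_ne_deliver (h : Step G c l c') {i : Fin n} {tp : Tuple n M}
    (htp : tp ∈ (c.proc i).pending) (hl : l ≠ .deliver i tp) : tp ∈ (c'.proc i).pending := by
  cases h with
  | broadcast i0 => rcases eq_or_ne i i0 with rfl | hi <;> simp_all
  | recvToco i0 => rcases eq_or_ne i i0 with rfl | hi <;> simp_all
  | recvCatchup i0 => rcases eq_or_ne i i0 with rfl | hi <;> simp_all
  | deliver i0 tp0 =>
    rcases eq_or_ne i i0 with rfl | hi
    · simp only [Function.update_self, Set.mem_sdiff, Set.mem_singleton_iff]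
      exact ⟨htp, by rintro rfl; exact hl rfl⟩
    · simp_all

open scoped Classical in
theorem causal_of_step (h : Step G c l c') (j k : Fin n) :
    (c'.proc j).causal k = (c.proc j).causal k +
      if (k = j ∧ ∃ m, l = .broadcast j m) ∨
        (k ≠ j ∧ ∃ tp, tp.sender = k ∧ l = .deliver j tp) then 1 else 0 := by
  cases h with
  | broadcast i0 m =>
    rcases eq_or_ne i0 j with rfl | hj
    · rcases eq_or_ne k i0 with rfl | hk <;> simp [*]
    · simp [hj, hj.symm]
  | deliver i0 tp0 =>
    rcases eq_or_ne i0 j with rfl | hj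
    · by_cases hs : tp0.sender = i0
      · rcases eq_or_ne k i0 with rfl | hk <;> simp [*, Ne.symm]
      · rcases eq_or_ne k tp0.sender with rfl | hk <;> simp [*, Ne.symm]
    · simp [hj, hj.symm]
  | recvToco i0 => rcases eq_or_ne j i0 with rfl | hj <;> simp [*]
  | recvCatchup i0 => rcases eq_or_ne j i0 with rfl | hj <;> simp [*]

theorem Step.total_self_of_broadcast {i : Fin n} {m : M} (h : Step G c (.broadcast i m) c') :
    (c'.proc i).total i = (c.broadcastTuple i m).stot := by
  cases h; simp [Config.broadcastTuple]

theorem Step.broadcastTuple_mem_pending {i : Fin n} {m : M} (h : Step G c (.broadcast i m) c') :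
    c.broadcastTuple i m ∈ (c'.proc i).pending := by
  cases h; simp [Config.broadcastTuple]

theorem Step.tocobc_mem_chan {i b : Fin n} {m : M} (h : Step G c (.broadcast i m) c')
    (hb : b ≠ i) : .tocobc (c.broadcastTuple i m) ∈ c'.chan i b := by
  cases h; simp [Config.broadcastTuple, hb]

theorem Step.mem_pending_of_deliver {i : Fin n} {tp : Tuple n M}
    (h : Step G c (.deliver i tp) c') : tp ∈ (c.proc i).pending :=
  by cases h with | deliver _ _ hT2 => exact hT2.1.1.1

theorem Step.ts_le_of_deliver {i : Fin n} {tp tp' : Tuple n M}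
    (h : Step G c (.deliver i tp) c') (h' : inT2 G c i tp') : tp.ts ≤ tp'.ts := by
  cases h with | deliver _ _ _ hmin => exact tsLe_iff_toLex_le.1 (hmin tp' h')

theorem Step.not_mem_pending_of_deliver {i : Fin n} {tp : Tuple n M}
    (h : Step G c (.deliver i tp) c') : tp ∉ (c'.proc i).pending := by
  cases h; simp

theorem Step.total_of_recv (hc : c.Inv) {i j : Fin n} {p : PMsg n M} {rest : List (PMsg n M)}
    (h : Step G c l c') (hl : l = .recvToco i j ∨ l = .recvCatchup i j)
    (hhead : c.chan j i = p :: rest) : (c'.proc i).total j = p.clock := by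
  obtain ⟨hs, hji, -⟩ := hc.of_chan_eq_cons hhead
  rcases hl with rfl | rfl
  · cases h with
    | recvToco _ _ tp _ hhead' =>
      rw [hhead] at hhead'; obtain ⟨rfl, -⟩ := List.cons.inj hhead'
      simp only [PMsg.sender] at hs; subst hs
      simp [ite_apply, hji]
  · cases h with
    | recvCatchup _ _ d s _ hhead' =>
      rw [hhead] at hhead'; obtain ⟨rfl, -⟩ := List.cons.inj hhead'
      simp only [PMsg.sender] at hs; subst hs
      simp

theorem Step.mem_pending_of_recvToco (hc : c.Inv) {i j : Fin n} {tp : Tuple n M}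
    {rest : List (PMsg n M)}
    (h : Step G c (.recvToco i j) c') (hhead : c.chan j i = .tocobc tp :: rest) :
    tp ∈ (c'.proc i).pending ∧ tp.stot < (c'.proc i).total i := by
  obtain ⟨hs, hji, -⟩ := hc.of_chan_eq_cons hhead
  cases h with
  | recvToco _ _ tp' _ hhead' =>
    rw [hhead] at hhead'; obtain ⟨⟨⟩, -⟩ := List.cons.inj hhead'
    simp only [PMsg.sender] at hs; subst hs
    simp only [Function.update_self, Set.mem_insert_iff, true_or, true_and]
    split_ifs with hle
    · simp
    · rw [Function.update_of_ne hji.symm]; omega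

theorem Config.Inv.total_sender_lt_stot_of_step (hc : c.Inv) (h : Step G c l c') {i : Fin n}
    {tp : Tuple n M} (htp : tp ∈ (c'.proc i).pending) (hnew : tp ∉ (c.proc i).pending) :
    (c.proc i).total tp.sender < tp.stot := by
  rcases mem_pending_of_step h htp with hold | ⟨m, rfl, rfl⟩ | ⟨j, rest, rfl, hhead⟩
  · exact absurd hold hnew
  · simp [Config.broadcastTuple]
  · obtain ⟨hs, -, hlt⟩ := hc.of_chan_eq_cons hhead
    simp only [PMsg.sender] at hs; subst hs
    exact hlt

theorem Config.Inv.stot_le_total_of_step (hc : c.Inv) (h : Step G c l c') {i : Fin n}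
    {tp : Tuple n M} (htp : tp ∈ (c'.proc i).pending) (hnew : tp ∉ (c.proc i).pending) :
    tp.stot ≤ (c'.proc i).total tp.sender ∧ tp.stot ≤ (c'.proc i).total i := by
  rcases mem_pending_of_step h htp with hold | ⟨m, rfl, rfl⟩ | ⟨j, rest, rfl, hhead⟩
  · exact absurd hold hnew
  · exact ⟨h.total_self_of_broadcast.ge, h.total_self_of_broadcast.ge⟩
  · obtain ⟨hs, -, -⟩ := hc.of_chan_eq_cons hhead
    simp only [PMsg.sender] at hs
    refine ⟨?_, (h.mem_pending_of_recvToco hc hhead).2.le⟩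
    rw [hs, h.total_of_recv hc (.inl rfl) hhead, PMsg.clock]

theorem Config.Inv.step (hc : c.Inv) (h : Step G c l c') : c'.Inv where
  chan_self i := by
    by_contra hne
    obtain ⟨p, hp⟩ := List.exists_mem_of_ne_nil _ hne
    rcases mem_chan_of_step h hp with hp | ⟨hii, -⟩
    · simp [hc.chan_self] at hp
    · exact hii rfl
  sender_eq j i p hp := by
    rcases mem_chan_of_step h hp with hp | ⟨-, ⟨m, -, rfl⟩ | ⟨d, rfl⟩⟩
    · exact hc.sender_eq j i p hp
    · rfl
    · rfl
  view_chain j i hij := by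
    have hchain := hc.view_chain j i hij
    rcases viewStep_of_step hc h hij with ⟨hv, -⟩ | ⟨hv, hlt⟩ | ⟨hv, -⟩
    · rwa [hv]
    · rw [hv]
      refine hchain.append (List.isChain_singleton _) ?_
      intro x hx y hy
      rw [List.getLast?_eq_some_getLast (l := c.view j i) (List.cons_ne_nil _ _),
        Option.mem_some_iff, hc.view_getLast j i hij] at hx
      simp only [List.head?_cons, Option.mem_some_iff] at hy
      exact hx ▸ hy ▸ hlt
    · rw [hv]; exact hchain.tail
  view_getLast j i hij := by
    rcases viewStep_of_step hc h hij with ⟨hv, ht⟩ | ⟨hv, -⟩ | ⟨hv, ht⟩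
    · simp only [hv, ht, hc.view_getLast j i hij]
    · simp only [hv, List.getLast_append_singleton]
    · rw [ht, ← hc.view_getLast j i hij]
      simp only [hv, List.getLast_tail]
  stot_le_total_sender i tp htp := by
    by_cases hold : tp ∈ (c.proc i).pending
    · exact (hc.stot_le_total_sender i tp hold).trans (total_le_total_of_step hc h i _)
    · exact (hc.stot_le_total_of_step h htp hold).1
  stot_le_total_self i tp htp := by
    by_cases hold : tp ∈ (c.proc i).pending
    · exact (hc.stot_le_total_self i tp hold).trans (total_le_total_of_step hc h i _)
    · exact (hc.stot_le_total_of_step h htp hold).2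

theorem Step.head_of_recvCatchup {i j : Fin n} (h : Step G c (.recvCatchup i j) c') :
    ∃ d s rest, c.chan j i = .catchup d s :: rest := by
  cases h with | recvCatchup _ _ d s rest hhead => exact ⟨d, s, rest, hhead⟩

theorem chan_of_step (h : Step G c l c') (j i : Fin n) :
    (l = .recvToco i j ∨ l = .recvCatchup i j) ∧ c'.chan j i = (c.chan j i).tail ∨
      ¬(l = .recvToco i j ∨ l = .recvCatchup i j) ∧ c.chan j i <+: c'.chan j i := by
  cases h with
  | broadcast i0 m =>
    refine .inr ⟨by simp, ?_⟩
    simp only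
    split_ifs
    exacts [List.prefix_append _ _, List.prefix_refl _]
  | recvToco i0 j0 tp rest hhead =>
    by_cases hp : j = j0 ∧ i = i0
    · obtain ⟨rfl, rfl⟩ := hp
      exact .inl ⟨by simp, by simp [hhead]⟩
    · refine .inr ⟨by rintro (h | h) <;> cases h; exact hp ⟨rfl, rfl⟩, ?_⟩
      simp only [if_neg hp]
      split_ifs
      exacts [List.prefix_append _ _, List.prefix_refl _]
  | recvCatchup i0 j0 d s rest hhead =>
    by_cases hp : j = j0 ∧ i = i0
    · obtain ⟨rfl, rfl⟩ := hp
      exact .inl ⟨by simp, by simp [hhead]⟩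
    · refine .inr ⟨by rintro (h | h) <;> cases h; exact hp ⟨rfl, rfl⟩, ?_⟩
      simp [if_neg hp]
  | deliver => exact .inr ⟨by simp, List.prefix_refl _⟩

end Step

theorem initConfig_inv : (initConfig n M).Inv where
  chan_self _ := rfl
  sender_eq _ _ _ hp := by simp [initConfig] at hp
  view_chain _ _ _ := by simp [Config.view, initConfig]
  view_getLast _ _ _ := by simp [Config.view, initConfig]
  stot_le_total_sender _ _ hp := by simp [initConfig] at hp
  stot_le_total_self _ _ hp := by simp [initConfig] at hp

namespace Execution

variable (e : Execution n M G)

abbrev pending (t : ℕ) (i : Fin n) : Set (Tuple n M) := ((e.cfg t).proc i).pending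

abbrev total (t : ℕ) (i k : Fin n) : ℕ := ((e.cfg t).proc i).total k

abbrev causal (t : ℕ) (i k : Fin n) : ℕ := ((e.cfg t).proc i).causal k

def RecvAt (i j : Fin n) (t : ℕ) : Prop :=
  e.lbl t = some (.recvToco i j) ∨ e.lbl t = some (.recvCatchup i j)

def CreatesAt (s : ℕ) (tp : Tuple n M) : Prop :=
  e.lbl s = some (.broadcast tp.sender tp.msg) ∧ tp = (e.cfg s).broadcastTuple tp.sender tp.msg

variable {e}

theorem step_of_lbl {t : ℕ} {l : Label n M} (h : e.lbl t = some l) :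
    Step G (e.cfg t) l (e.cfg (t + 1)) := by
  simpa [h, OptStep] using e.steps t

theorem cfg_succ_of_lbl {t : ℕ} (h : e.lbl t = none) : e.cfg (t + 1) = e.cfg t := by
  simpa [h, OptStep] using e.steps t

theorem inv (t : ℕ) : (e.cfg t).Inv := by
  induction t with
  | zero => exact e.init ▸ initConfig_inv
  | succ t ih =>
    cases hl : e.lbl t with
    | none => rwa [cfg_succ_of_lbl hl]
    | some l => exact ih.step (step_of_lbl hl)

theorem total_mono (i k : Fin n) : Monotone (e.total · i k) := by
  refine monotone_nat_of_le_succ fun t => ?_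
  cases hl : e.lbl t with
  | none => show e.total t i k ≤ e.total (t + 1) i k; rw [total, total, cfg_succ_of_lbl hl]
  | some l => exact total_le_total_of_step (e.inv t) (step_of_lbl hl) i k

theorem chan_succ (t : ℕ) (j i : Fin n) :
    e.RecvAt i j t ∧ (e.cfg (t + 1)).chan j i = ((e.cfg t).chan j i).tail ∨
      ¬e.RecvAt i j t ∧ (e.cfg t).chan j i <+: (e.cfg (t + 1)).chan j i := by
  cases hl : e.lbl t with
  | none => exact .inr ⟨by simp [RecvAt, hl], by simp [cfg_succ_of_lbl hl]⟩
  | some l => simpa [RecvAt, hl] using chan_of_step (step_of_lbl hl) j i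

theorem chan_prefix_of_not_recv {j i : Fin n} {t t' : ℕ} (htt' : t ≤ t')
    (hno : ∀ u, t ≤ u → u < t' → ¬e.RecvAt i j u) :
    (e.cfg t).chan j i <+: (e.cfg t').chan j i := by
  induction t', htt' using Nat.le_induction with
  | base => exact List.prefix_refl _
  | succ t' htt' ih =>
    rcases chan_succ t' j i with ⟨hr, -⟩ | ⟨-, hpre⟩
    · exact absurd hr (hno t' htt' (Nat.lt_succ_self _))
    · exact (ih fun u hu hu' => hno u hu (by omega)).trans hpre

theorem exists_recv_prefix (hf : Fair e) {j i : Fin n} {t : ℕ} (hne : (e.cfg t).chan j i ≠ []) :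
    ∃ t' ≥ t, e.RecvAt i j t' ∧ (e.cfg t).chan j i <+: (e.cfg t').chan j i := by
  classical
  have hex : ∃ d, e.RecvAt i j (t + d) := by
    obtain ⟨t', ht', hr⟩ := hf.recvFair t i j hne
    exact ⟨t' - t, by rwa [Nat.add_sub_cancel' ht']⟩
  refine ⟨t + Nat.find hex, by omega, Nat.find_spec hex, chan_prefix_of_not_recv (by omega) ?_⟩
  intro u hu hu'
  have := Nat.find_min hex (m := u - t) (by omega)
  rwa [Nat.add_sub_cancel' hu] at this

theorem exists_recv_of_getElem? (hf : Fair e) {j i : Fin n} {p : PMsg n M} (idx : ℕ) :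
    ∀ t, ((e.cfg t).chan j i)[idx]? = some p →
      ∃ t' ≥ t, ∃ rest, e.RecvAt i j t' ∧ (e.cfg t').chan j i = p :: rest := by
  have hrecv : ∀ k t : ℕ, ((e.cfg t).chan j i)[k]? = some p →
      ∃ t' ≥ t, e.RecvAt i j t' ∧ ((e.cfg t').chan j i)[k]? = some p := by
    intro k t hp
    obtain ⟨t', ht', hr, r, hr'⟩ := exists_recv_prefix hf (j := j) (i := i) (t := t)
      (by rintro h; simp [h] at hp)
    refine ⟨t', ht', hr, ?_⟩
    rw [← hr', List.getElem?_append_left (List.getElem?_eq_some_iff.1 hp).1, hp]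
  induction idx with
  | zero =>
    intro t hp
    obtain ⟨t', ht', hr, hp'⟩ := hrecv 0 t hp
    obtain ⟨rest, hrest⟩ : ∃ rest, (e.cfg t').chan j i = p :: rest := by
      cases h : (e.cfg t').chan j i <;> simp_all
    exact ⟨t', ht', rest, hr, hrest⟩
  | succ idx ih =>
    intro t hp
    obtain ⟨t', ht', hr, hp'⟩ := hrecv _ t hp
    rcases chan_succ t' j i with ⟨-, htail⟩ | ⟨hnr, -⟩
    · obtain ⟨t'', ht'', h⟩ := ih (t' + 1) (by rwa [htail, List.getElem?_tail])
      exact ⟨t'', by omega, h⟩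
    · exact absurd hr hnr

theorem exists_recv_of_mem (hf : Fair e) {j i : Fin n} {p : PMsg n M} {t : ℕ}
    (hp : p ∈ (e.cfg t).chan j i) :
    ∃ t' ≥ t, ∃ rest, e.RecvAt i j t' ∧ (e.cfg t').chan j i = p :: rest := by
  obtain ⟨idx, hidx⟩ := List.mem_iff_getElem?.1 hp
  exact exists_recv_of_getElem? hf idx t hidx

theorem total_succ_of_recv {i j : Fin n} {t : ℕ} {p : PMsg n M} {rest : List (PMsg n M)}
    (hr : e.RecvAt i j t) (hhead : (e.cfg t).chan j i = p :: rest) :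
    e.total (t + 1) i j = p.clock := by
  rcases hr with hl | hl
  · exact (step_of_lbl hl).total_of_recv (e.inv t) (.inl rfl) hhead
  · exact (step_of_lbl hl).total_of_recv (e.inv t) (.inr rfl) hhead

theorem eventually_total_ge (hf : Fair e) (t : ℕ) (j k : Fin n) :
    ∀ᶠ u in Filter.atTop, e.total t k k ≤ e.total u j k := by
  suffices ∃ t', e.total t k k ≤ e.total t' j k by
    obtain ⟨t', h⟩ := this
    exact Filter.eventually_atTop.2 ⟨t', fun u hu => h.trans (total_mono j k hu)⟩
  by_cases hjk : j = k
  · exact ⟨t, by rw [hjk]⟩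
  have hlast := (e.inv t).view_getLast k j hjk
  by_cases hnil : (e.cfg t).chan k j = []
  · simp only [Config.view, hnil, List.map_nil, List.getLast_singleton] at hlast
    exact ⟨t, hlast.ge⟩
  · obtain ⟨t', -, rest, hr, hhead⟩ := exists_recv_of_mem hf (List.getLast_mem hnil)
    refine ⟨t' + 1, (total_succ_of_recv hr hhead).symm ▸ le_of_eq ?_⟩
    simp only [Config.view, ne_eq, List.map_eq_nil_iff, hnil, not_false_eq_true,
      List.getLast_cons, List.getLast_map] at hlast
    exact hlast.symm

theorem exists_mem_pending_of_tocobc_mem (hf : Fair e) {j i : Fin n} {tp : Tuple n M} {t : ℕ}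
    (h : .tocobc tp ∈ (e.cfg t).chan j i) :
    ∃ t', tp ∈ e.pending t' i ∧ tp.stot < e.total t' i i := by
  obtain ⟨t', -, rest, hr, hhead⟩ := exists_recv_of_mem hf h
  rcases hr with hl | hl
  · exact ⟨t' + 1, (step_of_lbl hl).mem_pending_of_recvToco (e.inv t') hhead⟩
  · obtain ⟨d, s, rest', hhead'⟩ := (step_of_lbl hl).head_of_recvCatchup
    simp [hhead] at hhead'

namespace CreatesAt

variable {s : ℕ} {tp : Tuple n M}

theorem step (h : e.CreatesAt s tp) :
    Step G (e.cfg s) (.broadcast tp.sender tp.msg) (e.cfg (s + 1)) :=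
  step_of_lbl h.1

theorem mem_pending (h : e.CreatesAt s tp) : tp ∈ e.pending (s + 1) tp.sender := by
  rw [h.2]; exact h.step.broadcastTuple_mem_pending

theorem total_succ (h : e.CreatesAt s tp) : e.total (s + 1) tp.sender tp.sender = tp.stot := by
  rw [h.2]; exact h.step.total_self_of_broadcast

theorem stot_eq (h : e.CreatesAt s tp) : tp.stot = e.total s tp.sender tp.sender + 1 := by
  rw [h.2]; rfl

theorem exists_mem_pending (hf : Fair e) (h : e.CreatesAt s tp) (j : Fin n) :
    ∃ t, tp ∈ e.pending t j := by
  by_cases hj : j = tp.sender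
  · exact ⟨s + 1, hj ▸ h.mem_pending⟩
  · have hchan : .tocobc tp ∈ (e.cfg (s + 1)).chan tp.sender j := by
      rw [h.2]; exact h.step.tocobc_mem_chan hj
    obtain ⟨t, ht, -⟩ := exists_mem_pending_of_tocobc_mem hf hchan
    exact ⟨t, ht⟩

theorem eventually_stot_lt_total (hf : Fair e) (h : e.CreatesAt s tp) (j : Fin n) {k : Fin n}
    (hk : k ≠ tp.sender) : ∀ᶠ u in Filter.atTop, tp.stot < e.total u j k := by
  have hchan : .tocobc tp ∈ (e.cfg (s + 1)).chan tp.sender k := by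
    rw [h.2]; exact h.step.tocobc_mem_chan hk
  obtain ⟨t, -, hlt⟩ := exists_mem_pending_of_tocobc_mem hf hchan
  filter_upwards [eventually_total_ge hf t j k] with u hu using hlt.trans_le hu

theorem stot_lt_of_lt {s' : ℕ} {tp' : Tuple n M} (h : e.CreatesAt s tp) (h' : e.CreatesAt s' tp')
    (hsender : tp.sender = tp'.sender) (hlt : s < s') : tp.stot < tp'.stot := by
  have := total_mono (e := e) tp.sender tp.sender (show s + 1 ≤ s' from hlt)
  simp only at this
  rw [h'.stot_eq, ← hsender, ← h.total_succ]
  omega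

theorem unique {tp' : Tuple n M} (h : e.CreatesAt s tp) (h' : e.CreatesAt s tp') : tp = tp' := by
  have := h.1.symm.trans h'.1
  simp only [Option.some.injEq, Label.broadcast.injEq] at this
  rw [h.2, h'.2, this.1, this.2]

theorem eq_of_ts_eq {s' : ℕ} {tp' : Tuple n M} (h : e.CreatesAt s tp) (h' : e.CreatesAt s' tp')
    (hts : tp.ts = tp'.ts) : tp = tp' := by
  obtain ⟨hstot, hsender⟩ := Prod.mk.inj (toLex_inj.1 hts)
  obtain rfl : s = s' := by
    by_contra hne
    rcases Nat.lt_or_gt_of_ne hne with hlt | hlt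
    · exact (h.stot_lt_of_lt h' hsender hlt).ne hstot
    · exact (h'.stot_lt_of_lt h hsender.symm hlt).ne hstot.symm
  exact h.unique h'

end CreatesAt

theorem exists_createsAt (t : ℕ) :
    (∀ i, ∀ tp ∈ e.pending t i, ∃ s, e.CreatesAt s tp) ∧
      ∀ j i tp, .tocobc tp ∈ (e.cfg t).chan j i → ∃ s, e.CreatesAt s tp := by
  induction t with
  | zero => simp [pending, e.init, initConfig]
  | succ t ih =>
    cases hl : e.lbl t with
    | none => simpa [pending, cfg_succ_of_lbl hl] using ih
    | some l =>
      have hstep := step_of_lbl hl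
      refine ⟨fun i tp htp => ?_, fun j i tp htp => ?_⟩
      · rcases mem_pending_of_step hstep htp with
          hold | ⟨m, rfl, rfl⟩ | ⟨j, rest, rfl, hhead⟩
        · exact ih.1 i tp hold
        · exact ⟨t, hl, rfl⟩
        · exact ih.2 j i tp (by simp [hhead])
      · rcases mem_chan_of_step hstep htp with hold | ⟨-, ⟨m, rfl, hp⟩ | ⟨d, hp⟩⟩
        · exact ih.2 j i tp hold
        · obtain rfl := PMsg.tocobc.inj hp
          exact ⟨t, hl, rfl⟩
        · cases hp

theorem exists_createsAt_of_mem_pending {t : ℕ} {i : Fin n} {tp : Tuple n M}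
    (h : tp ∈ e.pending t i) : ∃ s, e.CreatesAt s tp :=
  (exists_createsAt t).1 i tp h

theorem eq_of_mem_pending_of_ts_eq {t t' : ℕ} {i i' : Fin n} {tp tp' : Tuple n M}
    (h : tp ∈ e.pending t i) (h' : tp' ∈ e.pending t' i') (hts : tp.ts = tp'.ts) :
    tp = tp' := by
  obtain ⟨s, hs⟩ := exists_createsAt_of_mem_pending h
  obtain ⟨s', hs'⟩ := exists_createsAt_of_mem_pending h'
  exact hs.eq_of_ts_eq hs' hts

theorem mem_pending_of_forall_ne_deliver {t t' : ℕ} {i : Fin n} {tp : Tuple n M}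
    (h : tp ∈ e.pending t i) (hnd : ∀ u, e.lbl u ≠ some (.deliver i tp)) (htt' : t ≤ t') :
    tp ∈ e.pending t' i := by
  induction t', htt' using Nat.le_induction with
  | base => exact h
  | succ u _ ih =>
    cases hl : e.lbl u with
    | none => simpa [pending, cfg_succ_of_lbl hl] using ih
    | some l =>
      exact (step_of_lbl hl).mem_pending_of_ne_deliver ih fun h => hnd u (hl ▸ h ▸ rfl)

theorem not_mem_pending_of_stot_le {t t' : ℕ} {i : Fin n} {tp : Tuple n M}
    (h : tp ∉ e.pending t i) (hle : tp.stot ≤ e.total t i tp.sender) (htt' : t ≤ t') :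
    tp ∉ e.pending t' i := by
  induction t', htt' using Nat.le_induction with
  | base => exact h
  | succ u htu ih =>
    intro hmem
    cases hl : e.lbl u with
    | none => exact ih (by simpa [pending, cfg_succ_of_lbl hl] using hmem)
    | some l =>
      have hlt : e.total u i tp.sender < tp.stot :=
        (e.inv u).total_sender_lt_stot_of_step (step_of_lbl hl) hmem ih
      have := total_mono (e := e) i tp.sender htu
      simp only at this
      omega

theorem not_mem_pending_of_deliver {s t : ℕ} {i : Fin n} {tp : Tuple n M}
    (hd : e.lbl s = some (.deliver i tp)) (hst : s < t) : tp ∉ e.pending t i := by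
  have hstep := step_of_lbl hd
  have hle := (e.inv s).stot_le_total_sender i tp hstep.mem_pending_of_deliver
  exact not_mem_pending_of_stot_le hstep.not_mem_pending_of_deliver
    (hle.trans (total_mono i tp.sender (Nat.le_succ s))) hst

variable (e) in
/-- The step at time `s` increments `causal_j[tp.sender]` on account of `tp`. -/
def CountsAt (j : Fin n) (s : ℕ) (tp : Tuple n M) : Prop :=
  (tp.sender = j ∧ e.CreatesAt s tp) ∨ (tp.sender ≠ j ∧ e.lbl s = some (.deliver j tp))

variable (e) in
def Counted (j : Fin n) (t : ℕ) (tp : Tuple n M) : Prop :=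
  ∃ s < t, e.CountsAt j s tp

theorem counted_succ_iff {j : Fin n} {t : ℕ} {tp : Tuple n M} :
    e.Counted j (t + 1) tp ↔ e.Counted j t tp ∨ e.CountsAt j t tp := by
  simp only [Counted, Nat.lt_succ_iff_lt_or_eq, or_and_right, exists_or, exists_eq_left]

theorem countsAt_subsingleton (j : Fin n) (s : ℕ) : {tp | e.CountsAt j s tp}.Subsingleton := by
  rintro tp (⟨hs, hc⟩ | ⟨hs, hd⟩) tp' (⟨hs', hc'⟩ | ⟨hs', hd'⟩)
  · exact hc.unique hc'
  · simp [hc.1] at hd'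
  · simp [hc'.1] at hd
  · simpa using hd.symm.trans hd'

theorem finite_counted (j : Fin n) (t : ℕ) : {tp | e.Counted j t tp}.Finite := by
  have : {tp | e.Counted j t tp} = ⋃ s ∈ Set.Iio t, {tp | e.CountsAt j s tp} := by
    ext tp; simp [Counted]
  rw [this]
  exact (Set.finite_Iio t).biUnion fun s _ => (countsAt_subsingleton j s).finite

theorem not_counted_of_countsAt {t : ℕ} {j : Fin n} {tp : Tuple n M}
    (h : e.CountsAt j t tp) : ¬e.Counted j t tp := by
  rintro ⟨s, hst, hs⟩
  rcases h with ⟨hj, hc⟩ | ⟨hj, hd⟩ <;> rcases hs with ⟨hj', hc'⟩ | ⟨hj', hd'⟩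
  · exact (hc'.stot_lt_of_lt hc rfl hst).ne rfl
  · exact hj' hj
  · exact hj hj'
  · exact not_mem_pending_of_deliver hd' hst (step_of_lbl hd).mem_pending_of_deliver

open scoped Classical in
theorem causal_succ (t : ℕ) (j k : Fin n) :
    e.causal (t + 1) j k =
      e.causal t j k + if ∃ tp, tp.sender = k ∧ e.CountsAt j t tp then 1 else 0 := by
  cases hl : e.lbl t with
  | none =>
    rw [causal, causal, cfg_succ_of_lbl hl]
    simp [CountsAt, CreatesAt, hl]
  | some l =>
    rw [causal, causal_of_step (step_of_lbl hl)]
    congr 2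
    apply propext
    constructor
    · rintro (⟨rfl, m, rfl⟩ | ⟨hk, tp, rfl, rfl⟩)
      · exact ⟨(e.cfg t).broadcastTuple k m, rfl, .inl ⟨rfl, hl, rfl⟩⟩
      · exact ⟨tp, rfl, .inr ⟨hk, hl⟩⟩
    · rintro ⟨tp, rfl, ⟨hj, hc⟩ | ⟨hj, hd⟩⟩
      · exact .inl ⟨hj, _, Option.some.inj (hl.symm.trans (hj ▸ hc.1))⟩
      · exact .inr ⟨hj, tp, rfl, Option.some.inj (hl.symm.trans hd)⟩

theorem causal_eq_ncard (t : ℕ) (j k : Fin n) :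
    e.causal t j k = {tp | tp.sender = k ∧ e.Counted j t tp}.ncard := by
  induction t with
  | zero => simp [causal, Counted, e.init, initConfig]
  | succ t ih =>
    classical
    rw [causal_succ, ih]
    split_ifs with hnew
    · obtain ⟨tp, rfl, htp⟩ := hnew
      have : {x | x.sender = tp.sender ∧ e.Counted j (t + 1) x} =
          insert tp {x | x.sender = tp.sender ∧ e.Counted j t x} := by
        ext x
        simp only [counted_succ_iff, Set.mem_ofPred_eq, Set.mem_insert_iff]
        constructor
        · rintro ⟨hx, hc | hc⟩
          · exact .inr ⟨hx, hc⟩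
          · exact .inl (countsAt_subsingleton j t hc htp)
        · rintro (rfl | ⟨hx, hc⟩)
          · exact ⟨rfl, .inr htp⟩
          · exact ⟨hx, .inl hc⟩
      rw [this, Set.ncard_insert_of_notMem (fun h => not_counted_of_countsAt htp h.2)
        ((finite_counted j t).subset fun _ h => h.2)]
    · rw [add_zero]
      congr 1
      ext x
      simp only [counted_succ_iff, Set.mem_ofPred_eq]
      exact ⟨fun ⟨hx, hc⟩ => ⟨hx, .inl hc⟩,
        fun ⟨hx, hc⟩ => ⟨hx, hc.resolve_right fun hc => hnew ⟨x, hx, hc⟩⟩⟩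

theorem Counted.mono {j : Fin n} {t t' : ℕ} {tp : Tuple n M} (h : e.Counted j t tp)
    (htt' : t ≤ t') : e.Counted j t' tp :=
  let ⟨s, hs, hc⟩ := h; ⟨s, hs.trans_le htt', hc⟩

theorem CountsAt.exists_createsAt {j : Fin n} {s : ℕ} {tp : Tuple n M}
    (h : e.CountsAt j s tp) : ∃ s', e.CreatesAt s' tp := by
  rcases h with ⟨-, hc⟩ | ⟨-, hd⟩
  · exact ⟨s, hc⟩
  · exact exists_createsAt_of_mem_pending (step_of_lbl hd).mem_pending_of_deliver

theorem CountsAt.stot_le_total {i : Fin n} {s : ℕ} {tp : Tuple n M} (h : e.CountsAt i s tp) :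
    tp.stot ≤ e.total (s + 1) i i := by
  rcases h with ⟨rfl, hc⟩ | ⟨-, hd⟩
  · exact hc.total_succ.ge
  · exact ((e.inv s).stot_le_total_self i tp (step_of_lbl hd).mem_pending_of_deliver).trans
      (total_mono i i (Nat.le_succ s))

theorem Counted.stot_le_total {i : Fin n} {t : ℕ} {tp : Tuple n M} (h : e.Counted i t tp) :
    tp.stot ≤ e.total t i i :=
  let ⟨_, hs, hc⟩ := h; hc.stot_le_total.trans (total_mono i i hs)

theorem CreatesAt.exists_counted {s d : ℕ} {j : Fin n} {tp : Tuple n M} (h : e.CreatesAt s tp)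
    (hd : e.lbl d = some (.deliver j tp)) : ∃ t, e.Counted j t tp := by
  by_cases hj : tp.sender = j
  · exact ⟨s + 1, s, Nat.lt_succ_self s, .inl ⟨hj, h⟩⟩
  · exact ⟨d + 1, d, Nat.lt_succ_self d, .inr ⟨hj, hd⟩⟩

theorem CreatesAt.eventually_scaus_le_causal {tb : ℕ} {tp : Tuple n M} (h : e.CreatesAt tb tp)
    (j : Fin n) (hprev : ∀ tp', (∃ s, e.CreatesAt s tp') → tp'.stot < tp.stot →
      ∃ d, e.lbl d = some (.deliver j tp')) :
    ∀ᶠ t in Filter.atTop, ∀ k, tp.scaus k ≤ e.causal t j k := by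
  refine Filter.eventually_all.2 fun k => ?_
  set A := {tp' | tp'.sender = k ∧ e.Counted tp.sender tb tp'}
  have hA : A.Finite := (finite_counted _ tb).subset fun _ h => h.2
  have hsub : ∀ᶠ t in Filter.atTop, ∀ tp' ∈ A, tp'.sender = k ∧ e.Counted j t tp' := by
    refine hA.eventually_all.2 fun tp' ⟨hk, hc⟩ => ?_
    have hlt : tp'.stot < tp.stot := h.stot_eq ▸ Nat.lt_succ_of_le hc.stot_le_total
    obtain ⟨s, hs, hcs⟩ := hc
    obtain ⟨d, hd⟩ := hprev tp' hcs.exists_createsAt hlt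
    obtain ⟨s', hs'⟩ := hcs.exists_createsAt
    obtain ⟨t, ht⟩ := hs'.exists_counted hd
    exact Filter.eventually_atTop.2 ⟨t, fun u hu => ⟨hk, ht.mono hu⟩⟩
  filter_upwards [hsub] with t ht
  have hscaus : tp.scaus k = e.causal tb tp.sender k := by rw [h.2]; rfl
  rw [hscaus, causal_eq_ncard, causal_eq_ncard]
  exact Set.ncard_le_ncard ht ((finite_counted j t).subset fun _ h => h.2)

/-- Timestamps identify tuples, so only finitely many tuples below `x` are ever pending. -/
theorem eventually_forall_pending_not_ts_lt (x : Lex (ℕ × Fin n)) (j : Fin n)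
    (hprev : ∀ tp, (∃ s, e.CreatesAt s tp) → tp.ts < x →
      ∃ d, e.lbl d = some (.deliver j tp)) :
    ∀ᶠ t in Filter.atTop, ∀ tp ∈ e.pending t j, ¬tp.ts < x := by
  set S := {tp : Tuple n M | (∃ t, tp ∈ e.pending t j) ∧ tp.ts < x}
  have hS : S.Finite := by
    refine Set.Finite.of_finite_image (f := fun tp => (tp.stot, tp.sender)) ?_ ?_
    · refine ((Set.finite_Iic (ofLex x).1).prod Set.finite_univ).subset ?_
      rintro _ ⟨tp, ⟨-, hlt⟩, rfl⟩
      have := (Prod.Lex.lt_iff.1 hlt)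
      simp only [Tuple.ts, ofLex_toLex] at this
      simp only [Set.mem_prod, Set.mem_Iic, Set.mem_univ, and_true]
      omega
    · rintro tp ⟨⟨t, ht⟩, -⟩ tp' ⟨⟨t', ht'⟩, -⟩ heq
      exact eq_of_mem_pending_of_ts_eq ht ht' (congrArg toLex heq)
  have hgone : ∀ᶠ t in Filter.atTop, ∀ tp ∈ S, tp ∉ e.pending t j := by
    refine hS.eventually_all.2 fun tp ⟨⟨t, ht⟩, hlt⟩ => ?_
    obtain ⟨d, hd⟩ := hprev tp (exists_createsAt_of_mem_pending ht) hlt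
    exact Filter.eventually_atTop.2 ⟨d + 1, fun u hu => not_mem_pending_of_deliver hd hu⟩
  filter_upwards [hgone] with t ht tp hp hlt
  exact ht tp ⟨⟨t, hp⟩, hlt⟩ hp

theorem CreatesAt.eventually_inT2 (hf : Fair e) {tb : ℕ} {tp : Tuple n M}
    (h : e.CreatesAt tb tp) (j : Fin n)
    (hprev : ∀ tp', (∃ s, e.CreatesAt s tp') → tp'.ts < tp.ts →
      ∃ d, e.lbl d = some (.deliver j tp'))
    (hnd : ∀ d, e.lbl d ≠ some (.deliver j tp)) :
    ∀ᶠ t in Filter.atTop, inT2 G (e.cfg t) j tp := by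
  obtain ⟨t0, h0⟩ := h.exists_mem_pending hf j
  have hpend : ∀ᶠ t in Filter.atTop, tp ∈ e.pending t j :=
    Filter.eventually_atTop.2 ⟨t0, fun t ht => mem_pending_of_forall_ne_deliver h0 hnd ht⟩
  have hcaus := h.eventually_scaus_le_causal j fun tp' hc hlt =>
    hprev tp' hc (Tuple.ts_lt_of_stot_lt hlt)
  have hnbr : ∀ᶠ t in Filter.atTop, ∀ k, G.Adj tp.sender k → tp.stot < e.total t j k := by
    refine Filter.eventually_all.2 fun k => ?_
    by_cases hadj : G.Adj tp.sender k
    · exact (h.eventually_stot_lt_total hf j hadj.ne.symm).mono fun _ ht _ => ht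
    · exact Filter.Eventually.of_forall fun _ hk => absurd hk hadj
  filter_upwards [hpend, hcaus, hnbr, eventually_forall_pending_not_ts_lt tp.ts j hprev]
    with t hp hc hn hs
  refine ⟨⟨⟨hp, hc⟩, fun k hk => .inl (hn k hk)⟩, fun tp' hp' hadj => ?_⟩
  rcases lt_trichotomy tp'.ts tp.ts with hlt | heq | hgt
  · exact absurd hlt (hs tp' hp')
  · obtain rfl := eq_of_mem_pending_of_ts_eq hp' hp heq
    exact absurd hadj (G.loopless.irrefl _)
  · exact tsLt_iff_toLex_lt.2 hgt

theorem CreatesAt.exists_deliver (hf : Fair e) {tb : ℕ} {tp : Tuple n M}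
    (h : e.CreatesAt tb tp) (j : Fin n)
    (hprev : ∀ tp', (∃ s, e.CreatesAt s tp') → tp'.ts < tp.ts →
      ∃ d, e.lbl d = some (.deliver j tp')) :
    ∃ d, e.lbl d = some (.deliver j tp) := by
  by_contra! hnd
  obtain ⟨T, hT⟩ := ((h.eventually_inT2 hf j hprev hnd).and
    (eventually_forall_pending_not_ts_lt tp.ts j hprev)).exists_forall_of_atTop
  obtain ⟨t, hTt, tp', hd⟩ := hf.deliverFair T j fun t ht => ⟨tp, (hT t ht).1⟩
  have hstep := step_of_lbl hd
  have hmem := hstep.mem_pending_of_deliver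
  rcases (hstep.ts_le_of_deliver (hT t hTt).1).lt_or_eq with hlt | heq
  · exact (hT t hTt).2 tp' hmem hlt
  · obtain rfl := eq_of_mem_pending_of_ts_eq hmem (hT t hTt).1.1.1.1 heq
    exact hnd t hd

theorem exists_deliver_of_createsAt (hf : Fair e) (tp : Tuple n M) (h : ∃ s, e.CreatesAt s tp)
    (j : Fin n) : ∃ d, e.lbl d = some (.deliver j tp) := by
  induction tp using (InvImage.wf Tuple.ts wellFounded_lt).induction generalizing j with
  | _ tp ih =>
    obtain ⟨s, hs⟩ := h
    exact hs.exists_deliver hf j fun tp' hc hlt => ih tp' hlt hc j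

end Execution

end Fisheye

namespace Fisheye

/-- **Termination (Theorem 2 of the paper).**  In any (fair) execution of
Algorithm 1 in the stated model, every message that is toco-broadcast by some
process is eventually toco-delivered by every process in the system. -/
theorem termination {n : ℕ} {M : Type} {G : SimpleGraph (Fin n)}
    (e : Execution n M G) (hfair : Fair e) :
    ∀ (i : Fin n) (m : M) (t : ℕ), e.broadcastsAt i m t →
      ∀ j : Fin n, ∃ t', e.deliversAt j m t' := by
  intro i m t hb j
  obtain ⟨d, hd⟩ :=
    e.exists_deliver_of_createsAt hfair ((e.cfg t).broadcastTuple i m) ⟨t, hb, rfl⟩ j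
  exact ⟨d, _, rfl, hd⟩

end Fisheye
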